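/- arXiv:2004.05883 — 7 statements merged into one kernel-verified Lean document; each statement's English description precedes it below -/
import Mathlib

section
/- Let n ≥ 1 be an integer, let S be a set of n² points partitioned into subsets S₁, S₂, …, S_n each of size n, let q₁, q₂, …, q_n be n additional points, and let P = S ∪ {q₁,…,q_n}. Define dist(x,y) = 0 if x = y; dist(x,y) = 1 if there is an i such that {x,y} = {q_i, s} for some s ∈ S_i; and dist(x,y) = 2 otherwise. Then (P, dist) is a metric space, and the smallest integer λ such that for every p ∈ P and every real R > 0 the ball ball_P(p,R) can be covered by at most λ balls in P of radius R/2 centered at points of P is exactly n + 1; equivalently, the doubling dimension of (P, dist) equals log₂(n+1). -/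
/-- The point set `P = S ∪ {q₁, …, q_n}`, where `S` consists of `n²` points
partitioned into sets `S₁, …, S_n` of size `n` each. We represent the point of
`S_i` with index `j` by `Sum.inl (i, j)` and the point `q_i` by `Sum.inr i`. -/
abbrev ExamplePoint (n : ℕ) := (Fin n × Fin n) ⊕ Fin n

/-- The distance function: `dist(x, x) = 0`; `dist(x, y) = 1` if `{x, y} = {qᵢ, s}`
with `s ∈ Sᵢ`; and `dist(x, y) = 2` otherwise. -/
def exampleDist (n : ℕ) : ExamplePoint n → ExamplePoint n → ℝ
  | Sum.inl a, Sum.inl b => if a = b then 0 else 2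
  | Sum.inl a, Sum.inr i => if a.1 = i then 1 else 2
  | Sum.inr i, Sum.inl a => if a.1 = i then 1 else 2
  | Sum.inr i, Sum.inr j => if i = j then 0 else 2

lemma exampleDist_self (n : ℕ) (x : ExamplePoint n) : exampleDist n x x = 0 := by
  rcases x with a | i <;> simp [exampleDist]

lemma exampleDist_one_le (n : ℕ) {x y : ExamplePoint n} (h : x ≠ y) :
    1 ≤ exampleDist n x y := by
  rcases x with a | i <;> rcases y with b | j <;>
    simp only [exampleDist] <;> split_ifs <;> simp_all

lemma exampleDist_le_two (n : ℕ) (x y : ExamplePoint n) : exampleDist n x y ≤ 2 := by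
  rcases x with a | i <;> rcases y with b | j <;>
    simp only [exampleDist] <;> split_ifs <;> norm_num

lemma exampleDist_symm (n : ℕ) (x y : ExamplePoint n) :
    exampleDist n x y = exampleDist n y x := by
  rcases x with a | i <;> rcases y with b | j <;>
    simp only [exampleDist] <;> split_ifs <;> simp_all

lemma exampleDist_eq_of_lt_one (n : ℕ) {x y : ExamplePoint n} {r : ℝ}
    (h : exampleDist n x y ≤ r) (hr : r < 1) : x = y := by
  by_contra hne
  have := exampleDist_one_le n hne
  linarith

/-- `(P, dist)` as above is a metric space, and the smallest integer `λ` such that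
every ball `ball_P(p, R)` with `R > 0` can be covered by at most `λ` balls of
radius `R / 2` centered at points of `P` is exactly `n + 1`; i.e., the doubling
dimension of `(P, dist)` equals `log₂ (n + 1)`. -/
theorem example_doubling_constant (n : ℕ) (hn : 1 ≤ n) :
    (∀ x, exampleDist n x x = 0) ∧
    (∀ x y, x ≠ y → 0 < exampleDist n x y) ∧
    (∀ x y, exampleDist n x y = exampleDist n y x) ∧
    (∀ x y z, exampleDist n x z ≤ exampleDist n x y + exampleDist n y z) ∧
    IsLeast {lam : ℕ | ∀ (p : ExamplePoint n) (R : ℝ), 0 < R →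
      ∃ C : Finset (ExamplePoint n), C.card ≤ lam ∧
        ∀ x : ExamplePoint n, exampleDist n p x ≤ R →
          ∃ c ∈ C, exampleDist n c x ≤ R / 2} (n + 1) := by
  refine ⟨exampleDist_self n, ?_, exampleDist_symm n, ?_, ?_, ?_⟩
  · intro x y h
    have := exampleDist_one_le n h
    linarith
  · intro x y z
    by_cases hxy : x = y
    · subst hxy
      rw [exampleDist_self]
      simp
    by_cases hyz : y = z
    · subst hyz
      have h0 : (0:ℝ) ≤ exampleDist n x y := by
        have := exampleDist_one_le n hxy; linarith
      rw [exampleDist_self]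
      linarith
    have h1 := exampleDist_one_le n hxy
    have h2 := exampleDist_one_le n hyz
    have h3 := exampleDist_le_two n x z
    linarith
  · -- membership
    intro p R hR
    by_cases hR2 : 2 ≤ R
    · -- all q's
      refine ⟨Finset.univ.image Sum.inr, ?_, ?_⟩
      · calc (Finset.univ.image (Sum.inr : Fin n → ExamplePoint n)).card
            ≤ (Finset.univ : Finset (Fin n)).card := Finset.card_image_le
          _ = n := by simp
          _ ≤ n + 1 := Nat.le_succ n
      · intro x _
        rcases x with a | i
        · refine ⟨Sum.inr a.1, by simp, ?_⟩
          have h1 : exampleDist n (Sum.inr a.1) (Sum.inl a) = 1 := by simp [exampleDist]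
          rw [h1]; linarith
        · refine ⟨Sum.inr i, by simp, ?_⟩
          rw [exampleDist_self]
          linarith
    · push_neg at hR2
      -- radius < 2 : ball is small, cover by singletons
      rcases p with a | i
      · refine ⟨{Sum.inl a, Sum.inr a.1}, ?_, ?_⟩
        · calc ({Sum.inl a, Sum.inr a.1} : Finset (ExamplePoint n)).card ≤ 2 :=
              Finset.card_insert_le _ _ |>.trans (by simp)
            _ ≤ n + 1 := by omega
        · intro x hx
          have hmem : x ∈ ({Sum.inl a, Sum.inr a.1} : Finset (ExamplePoint n)) := by
            rcases x with b | j <;> simp only [exampleDist] at hx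
            · have hab : a = b := by
                by_contra h
                rw [if_neg h] at hx
                linarith
              subst hab; simp
            · have : a.1 = j := by
                by_contra h
                rw [if_neg h] at hx
                linarith
              subst this; simp
          exact ⟨x, hmem, by rw [exampleDist_self]; linarith⟩
      · refine ⟨insert (Sum.inr i) (Finset.univ.image (fun j => Sum.inl (i, j))), ?_, ?_⟩
        · calc _ ≤ (Finset.univ.image (fun j : Fin n => (Sum.inl (i, j) : ExamplePoint n))).card + 1 :=
              Finset.card_insert_le _ _
            _ ≤ n + 1 := by
              have : (Finset.univ.image (fun j : Fin n => (Sum.inl (i, j) : ExamplePoint n))).card ≤ n := by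
                calc _ ≤ (Finset.univ : Finset (Fin n)).card := Finset.card_image_le
                  _ = n := by simp
              omega
        · intro x hx
          have hmem : x ∈ insert (Sum.inr i) (Finset.univ.image (fun j => (Sum.inl (i, j) : ExamplePoint n))) := by
            rcases x with b | j <;> simp only [exampleDist] at hx
            · have : b.1 = i := by
                by_contra h
                rw [if_neg h] at hx
                linarith
              simp only [Finset.mem_insert, Finset.mem_image, Finset.mem_univ, true_and]
              exact Or.inr ⟨b.2, by rw [← this]⟩
            · have : i = j := by
                by_contra h
                rw [if_neg h] at hx
                linarith
              subst this; simp
          exact ⟨x, hmem, by rw [exampleDist_self]; linarith⟩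
  · -- lower bound
    intro lam hlam
    set i0 : Fin n := ⟨0, hn⟩
    obtain ⟨C, hCcard, hCcover⟩ := hlam (Sum.inr i0) 1 one_pos
    set B : Finset (ExamplePoint n) :=
      insert (Sum.inr i0) (Finset.univ.image (fun j => Sum.inl (i0, j))) with hB
    have hBC : B ⊆ C := by
      intro x hx
      have hdist : exampleDist n (Sum.inr i0) x ≤ 1 := by
        simp only [hB, Finset.mem_insert, Finset.mem_image, Finset.mem_univ, true_and] at hx
        rcases hx with rfl | ⟨j, rfl⟩
        · rw [exampleDist_self]; norm_num
        · simp [exampleDist]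
      obtain ⟨c, hcC, hc⟩ := hCcover x hdist
      have : c = x := exampleDist_eq_of_lt_one n hc (by norm_num)
      exact this ▸ hcC
    have hBcard : B.card = n + 1 := by
      rw [hB, Finset.card_insert_of_notMem (by simp)]
      rw [Finset.card_image_of_injective _ (fun a b h => by
        simpa using h)]
      simp
    calc n + 1 = B.card := hBcard.symm
      _ ≤ C.card := Finset.card_le_card hBC
      _ ≤ lam := hCcard
end

section
/- Let (P, dist) be a finite metric space whose doubling dimension is at most d, i.e., for every p ∈ P and every real R > 0 the ball ball_P(p,R) can be covered by at most 2^d balls in P of radius R/2 centered at points of P. Let S be a subset of P of size n, let μ ≥ 1 be a real number, and set c = 2(8μ)^d. If n ≥ c + 1, then there exist a point p ∈ S and a real number R' > 0 such that |ball_S(p,R')| ≥ n/c and |ball_S(p, μR')| ≤ n/2. -/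
/-!
Let `r` be the least radius for which some ball `ball_S(p, r)` holds at least `n / 2` points;
`r > 0` because `n ≥ 3`. Cover `ball(p, r)` by at most `(8μ)^d` balls of radius `r / (4μ)`:
one of them holds at least `n / c` points of `S`, and the ball of radius `R' = r / (2μ)` around
any of its points contains it. The ball of radius `μR' = r / 2 < r` around that point holds
fewer than `n / 2` points by the minimality of `r`.
-/

open Metric Finset

/-- `ballIn S p r` is the paper's `ball_S(p, r)`. -/
noncomputable def ballIn {P : Type*} [Dist P] (S : Finset P) (p : P) (r : ℝ) : Finset P :=
  S.filter fun x => dist p x ≤ r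

def HasDoublingConstant (P : Type*) [PseudoMetricSpace P] (K : ℝ) : Prop :=
  ∀ (p : P) (R : ℝ), 0 < R → ∃ C : Finset P,
    (C.card : ℝ) ≤ K ∧ closedBall p R ⊆ ⋃ c ∈ C, closedBall c (R / 2)

lemma exists_le_card_mul_card_of_subset_biUnion {α ι : Type*} [DecidableEq α] {T : Finset α}
    {C : Finset ι} {A : ι → Finset α} (hT : T.Nonempty) (hcover : T ⊆ C.biUnion A) :
    ∃ c ∈ C, #T ≤ #C * #(A c) := by
  have hC : C.Nonempty := by
    obtain ⟨x, hx⟩ := hT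
    obtain ⟨c, hc, -⟩ := mem_biUnion.mp (hcover hx)
    exact ⟨c, hc⟩
  refine exists_le_of_sum_le hC ?_
  rw [sum_const, smul_eq_mul, ← mul_sum]
  exact Nat.mul_le_mul_left _ ((card_le_card hcover).trans card_biUnion_le)

section Balls

variable {P : Type*}

@[simp]
lemma mem_ballIn [Dist P] {S : Finset P} {p x : P} {r : ℝ} :
    x ∈ ballIn S p r ↔ x ∈ S ∧ dist p x ≤ r :=
  mem_filter

lemma pos_of_one_lt_card_ballIn [MetricSpace P] {S : Finset P} {p : P} {r : ℝ}
    (h : 1 < #(ballIn S p r)) : 0 < r := by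
  obtain ⟨x, hx, y, hy, hxy⟩ := one_lt_card.mp h
  rw [mem_ballIn] at hx hy
  by_contra! hr
  have hx' : x = p := (dist_le_zero.mp (hx.2.trans hr)).symm
  have hy' : y = p := (dist_le_zero.mp (hy.2.trans hr)).symm
  exact hxy (hx'.trans hy'.symm)

lemma ballIn_subset_ballIn_two_mul [PseudoMetricSpace P] {S : Finset P} {c q : P} {ρ : ℝ}
    (hq : q ∈ ballIn S c ρ) : ballIn S c ρ ⊆ ballIn S q (2 * ρ) := by
  intro x hx
  rw [mem_ballIn] at hq hx ⊢
  refine ⟨hx.1, ?_⟩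
  calc dist q x ≤ dist c q + dist c x := dist_triangle_left q x c
    _ ≤ 2 * ρ := by linarith [hq.2, hx.2]

lemma ballIn_subset_biUnion [PseudoMetricSpace P] [DecidableEq P] {S C : Finset P} {p : P}
    {r ρ : ℝ} (hcover : closedBall p r ⊆ ⋃ c ∈ C, closedBall c ρ) :
    ballIn S p r ⊆ C.biUnion fun c => ballIn S c ρ := by
  intro x hx
  rw [mem_ballIn] at hx
  have hxball : x ∈ closedBall p r := by rw [mem_closedBall, dist_comm]; exact hx.2
  obtain ⟨c, hc, hxc⟩ := Set.mem_iUnion₂.mp (hcover hxball)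
  rw [mem_closedBall, dist_comm] at hxc
  exact mem_biUnion.mpr ⟨c, hc, mem_ballIn.mpr ⟨hx.1, hxc⟩⟩

lemma exists_ballIn_subset_ballIn_dist [Dist P] {S : Finset P} {q : P} {r : ℝ}
    (hne : (ballIn S q r).Nonempty) :
    ∃ y ∈ S, dist q y ≤ r ∧ ballIn S q r ⊆ ballIn S q (dist q y) := by
  obtain ⟨y, hy, hmax⟩ := (ballIn S q r).exists_max_image (dist q) hne
  rw [mem_ballIn] at hy
  exact ⟨y, hy.1, hy.2, fun x hx => mem_ballIn.mpr ⟨(mem_ballIn.mp hx).1, hmax x hx⟩⟩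

-- Only the finitely many distances within `S` need to be compared as radii.
lemma exists_minimal_radius_le_card_ballIn [Dist P] {S : Finset P} {t : ℝ} (ht : 0 < t)
    (htS : t ≤ #S) : ∃ p ∈ S, ∃ r : ℝ, t ≤ #(ballIn S p r) ∧
      ∀ q ∈ S, ∀ r' < r, (#(ballIn S q r') : ℝ) < t := by
  classical
  set G := (S ×ˢ S).filter fun pq => t ≤ #(ballIn S pq.1 (dist pq.1 pq.2))
  obtain ⟨p₀, hp₀⟩ : S.Nonempty := card_pos.mp (by exact_mod_cast ht.trans_le htS)
  have hGne : G.Nonempty := by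
    obtain ⟨x, hx, hmax⟩ := S.exists_max_image (dist p₀) ⟨p₀, hp₀⟩
    refine ⟨(p₀, x), mem_filter.mpr ⟨mem_product.mpr ⟨hp₀, hx⟩, ?_⟩⟩
    rwa [show ballIn S p₀ (dist p₀ x) = S from filter_true_of_mem hmax]
  obtain ⟨⟨p, x⟩, hG, hmin⟩ := G.exists_min_image (fun pq => dist pq.1 pq.2) hGne
  obtain ⟨hpx, hgood⟩ := mem_filter.mp hG
  refine ⟨p, (mem_product.mp hpx).1, dist p x, hgood, fun q hq r' hr' => ?_⟩
  by_contra! hq_good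
  have hne : (ballIn S q r').Nonempty := card_pos.mp (by exact_mod_cast ht.trans_le hq_good)
  obtain ⟨y, hy, hyr', hsub⟩ := exists_ballIn_subset_ballIn_dist hne
  have hqy : (q, y) ∈ G := mem_filter.mpr ⟨mem_product.mpr ⟨hq, hy⟩,
    hq_good.trans (by exact_mod_cast card_le_card hsub)⟩
  exact (hmin _ hqy).not_gt (hyr'.trans_lt hr')

end Balls

namespace HasDoublingConstant

variable {P : Type*} [PseudoMetricSpace P]

lemma exists_cover_div_two_pow {K : ℝ} (hK : HasDoublingConstant P K) (k : ℕ) (p : P)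
    {R : ℝ} (hR : 0 < R) : ∃ C : Finset P,
      (C.card : ℝ) ≤ K ^ k ∧ closedBall p R ⊆ ⋃ c ∈ C, closedBall c (R / 2 ^ k) := by
  classical
  induction k with
  | zero => exact ⟨{p}, by simp, by simp⟩
  | succ k ih =>
    obtain ⟨C, hC, hCcover⟩ := ih
    choose D hD hDcover using fun c : P => hK c (R / 2 ^ k) (by positivity)
    have hK0 : 0 ≤ K := (Nat.cast_nonneg _).trans (hD p)
    refine ⟨C.biUnion D, ?_, fun x hx => ?_⟩
    · calc (#(C.biUnion D) : ℝ) ≤ ∑ c ∈ C, (#(D c) : ℝ) := by exact_mod_cast card_biUnion_le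
        _ ≤ ∑ _c ∈ C, K := sum_le_sum fun c _ => hD c
        _ = #C * K := by rw [sum_const, nsmul_eq_mul]
        _ ≤ K ^ k * K := mul_le_mul_of_nonneg_right hC hK0
        _ = K ^ (k + 1) := (pow_succ K k).symm
    · obtain ⟨c, hc, hxc⟩ := Set.mem_iUnion₂.mp (hCcover hx)
      obtain ⟨c', hc', hxc'⟩ := Set.mem_iUnion₂.mp (hDcover c hxc)
      rw [pow_succ, ← div_div]
      exact Set.mem_iUnion₂.mpr ⟨c', mem_biUnion.mpr ⟨c, hc, hc'⟩, hxc'⟩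

-- Halve `k` times, where `κ < 2 ^ k ≤ 2κ`.
lemma exists_cover_div {d : ℝ} (hd : 0 ≤ d) (hdoub : HasDoublingConstant P (2 ^ d)) (p : P)
    {R : ℝ} (hR : 0 < R) {κ : ℝ} (hκ : 1 ≤ κ) : ∃ C : Finset P,
      (C.card : ℝ) ≤ (2 * κ) ^ d ∧ closedBall p R ⊆ ⋃ c ∈ C, closedBall c (R / κ) := by
  obtain ⟨k, hk_le, hk_lt⟩ := exists_nat_pow_near hκ one_lt_two
  obtain ⟨C, hC, hcover⟩ := hdoub.exists_cover_div_two_pow (k + 1) p hR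
  refine ⟨C, ?_, hcover.trans <| Set.iUnion₂_mono fun c _ =>
    closedBall_subset_closedBall <| div_le_div_of_nonneg_left hR.le (by positivity) hk_lt.le⟩
  calc (C.card : ℝ) ≤ ((2 : ℝ) ^ d) ^ (k + 1) := hC
    _ = ((2 : ℝ) ^ (k + 1)) ^ d := by
      rw [← Real.rpow_mul_natCast zero_le_two, ← Real.rpow_natCast_mul zero_le_two, mul_comm]
    _ ≤ (2 * κ) ^ d := by
      gcongr
      rw [pow_succ']
      linarith

end HasDoublingConstant

theorem separating_annulus_general {P : Type*} [MetricSpace P]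
    (d : ℝ) (hd : 1 ≤ d)
    (hdoub : ∀ (p : P) (R : ℝ), 0 < R → ∃ C : Finset P,
      (C.card : ℝ) ≤ (2 : ℝ) ^ d ∧
      Metric.closedBall p R ⊆ ⋃ c ∈ C, Metric.closedBall c (R / 2))
    (S : Finset P) (n : ℕ) (hn : S.card = n)
    (μ : ℝ) (hμ : 1 ≤ μ)
    (c : ℝ) (hc : c = 2 * (8 * μ) ^ d)
    (hnc : c + 1 ≤ (n : ℝ)) :
    ∃ p ∈ S, ∃ R' : ℝ, 0 < R' ∧
      (n : ℝ) / c ≤ ((S.filter fun x => dist p x ≤ R').card : ℝ) ∧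
      ((S.filter fun x => dist p x ≤ μ * R').card : ℝ) ≤ (n : ℝ) / 2 := by
  classical
  have hμ0 : 0 < μ := one_pos.trans_le hμ
  have hc2 : 2 ≤ c := by
    have := Real.one_le_rpow (by linarith : (1 : ℝ) ≤ 8 * μ) (by linarith : 0 ≤ d)
    linarith
  have hn_half : (1 : ℝ) < n / 2 := by linarith
  obtain ⟨p, -, r, hp_half, hmin⟩ :=
    exists_minimal_radius_le_card_ballIn (S := S) (zero_lt_one.trans hn_half) (by rw [hn]; linarith)
  have hp_two : 1 < #(ballIn S p r) := by exact_mod_cast hn_half.trans_le hp_half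
  have hr : 0 < r := pos_of_one_lt_card_ballIn hp_two
  obtain ⟨C, hC, hcover⟩ :=
    HasDoublingConstant.exists_cover_div (by linarith) hdoub p hr (by linarith : 1 ≤ 4 * μ)
  set ρ := r / (4 * μ)
  have hT : (ballIn S p r).Nonempty := card_pos.mp (zero_lt_one.trans hp_two)
  obtain ⟨z, -, hz⟩ := exists_le_card_mul_card_of_subset_biUnion hT (ballIn_subset_biUnion hcover)
  obtain ⟨q, hq⟩ : (ballIn S z ρ).Nonempty :=
    card_pos.mp (Nat.pos_of_mul_pos_left (hT.card_pos.trans_le hz))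
  have hqS : q ∈ S := (mem_ballIn.mp hq).1
  refine ⟨q, hqS, 2 * ρ, by positivity, ?_, (hmin q hqS _ ?_).le⟩
  · have hCc : 2 * (#C : ℝ) ≤ c := by rw [hc, show 8 * μ = 2 * (4 * μ) by ring]; linarith
    have hz' : (#(ballIn S p r) : ℝ) ≤ #C * #(ballIn S z ρ) := by exact_mod_cast hz
    have hzq : (#(ballIn S z ρ) : ℝ) ≤ #(ballIn S q (2 * ρ)) := by
      exact_mod_cast card_le_card (ballIn_subset_ballIn_two_mul hq)
    rw [div_le_iff₀ (by linarith)]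
    change (n : ℝ) ≤ #(ballIn S q (2 * ρ)) * c
    nlinarith
  · have : μ * (2 * ρ) = r / 2 := by simp only [ρ]; field_simp; ring
    linarith

/-- **Separating annulus (Har-Peled and Mendel).** Let `(P, dist)` be a finite
metric space of doubling dimension at most `d`, let `S ⊆ P` have `n` points,
let `μ ≥ 1` and `c = 2 (8μ)^d`. If `n ≥ c + 1`, then there exist a point `p ∈ S`
and a real `R' > 0` such that `|ball_S(p, R')| ≥ n / c` and
`|ball_S(p, μ R')| ≤ n / 2`. -/
theorem separating_annulus {P : Type*} [MetricSpace P] [Fintype P]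
    (d : ℝ) (hd : 1 ≤ d)
    (hdoub : ∀ (p : P) (R : ℝ), 0 < R → ∃ C : Finset P,
      (C.card : ℝ) ≤ (2 : ℝ) ^ d ∧
      Metric.closedBall p R ⊆ ⋃ c ∈ C, Metric.closedBall c (R / 2))
    (S : Finset P) (n : ℕ) (hn : S.card = n)
    (μ : ℝ) (hμ : 1 ≤ μ)
    (c : ℝ) (hc : c = 2 * (8 * μ) ^ d)
    (hnc : c + 1 ≤ (n : ℝ)) :
    ∃ p ∈ S, ∃ R' : ℝ, 0 < R' ∧
      (n : ℝ) / c ≤ ((S.filter fun x => dist p x ≤ R').card : ℝ) ∧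
      ((S.filter fun x => dist p x ≤ μ * R').card : ℝ) ≤ (n : ℝ) / 2 :=
  separating_annulus_general d hd hdoub S n hn μ hμ c hc hnc
end

section
/- Let (P, dist) be a finite metric space whose doubling dimension is at most d, i.e., for every p ∈ P and every real R > 0 the ball ball_P(p,R) can be covered by at most 2^d balls in P of radius R/2 centered at points of P. Let S be a subset of P of size n, let μ ≥ 1 be a real number, and set c = 2(8μ)^d; assume n ≥ c + 1. For p ∈ S, let R_p = min{r > 0 : |ball_S(p,r)| ≥ n/c}. Let q ∈ P and R > 0 be such that ball_P(q,R) is a ball of minimum radius centered at a point of P that contains at least n/c points of S. Then every point p ∈ S with dist(q,p) ≤ R satisfies R_p ≤ 2R and |ball_S(p, μ·R_p)| ≤ n/2. -/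
private lemma cover_iter {P : Type*} [MetricSpace P] (d : ℝ)
    (hdoub : ∀ (p : P) (R : ℝ), 0 < R → ∃ C : Finset P,
      (C.card : ℝ) ≤ (2 : ℝ) ^ d ∧
      Metric.closedBall p R ⊆ ⋃ c ∈ C, Metric.closedBall c (R / 2)) :
    ∀ (k : ℕ) (p : P) (r : ℝ), 0 < r → ∃ C : Finset P,
      (C.card : ℝ) ≤ ((2 : ℝ) ^ d) ^ k ∧
      Metric.closedBall p r ⊆ ⋃ c ∈ C, Metric.closedBall c (r / 2 ^ k) := by
  classical
  intro k
  induction k with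
  | zero =>
    intro p r hr
    refine ⟨{p}, by norm_num, ?_⟩
    intro x hx
    simp only [Set.mem_iUnion, Finset.mem_singleton]
    exact ⟨p, rfl, by simpa using hx⟩
  | succ k ih =>
    intro p r hr
    obtain ⟨C, hCcard, hCcov⟩ := ih p r hr
    have hpos : (0 : ℝ) < r / 2 ^ k := by positivity
    choose f hf1 hf2 using fun c' : P => hdoub c' (r / 2 ^ k) hpos
    refine ⟨C.biUnion f, ?_, ?_⟩
    · calc ((C.biUnion f).card : ℝ) ≤ ((∑ c' ∈ C, (f c').card : ℕ) : ℝ) := by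
            exact_mod_cast Finset.card_biUnion_le
        _ = ∑ c' ∈ C, ((f c').card : ℝ) := by push_cast; ring
        _ ≤ ∑ c' ∈ C, (2 : ℝ) ^ d := Finset.sum_le_sum fun c' _ => hf1 c'
        _ = (C.card : ℝ) * (2 : ℝ) ^ d := by rw [Finset.sum_const, nsmul_eq_mul]
        _ ≤ ((2 : ℝ) ^ d) ^ k * (2 : ℝ) ^ d := by
            have : (0:ℝ) ≤ (2:ℝ)^d := (Real.rpow_pos_of_pos (by norm_num) d).le
            exact mul_le_mul_of_nonneg_right hCcard this
        _ = ((2 : ℝ) ^ d) ^ (k + 1) := by ring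
    · intro x hx
      have := hCcov hx
      simp only [Set.mem_iUnion] at this ⊢
      obtain ⟨c', hc', hx'⟩ := this
      have := hf2 c' hx'
      simp only [Set.mem_iUnion] at this
      obtain ⟨c'', hc'', hx''⟩ := this
      refine ⟨c'', Finset.mem_biUnion.2 ⟨c', hc', hc''⟩, ?_⟩
      have : r / 2 ^ k / 2 = r / 2 ^ (k + 1) := by
        rw [div_div, ← pow_succ]
      rwa [this] at hx''

/-- Let `(P, dist)` be a finite metric space of doubling dimension at most `d`,
let `S ⊆ P` have `n` points, let `μ ≥ 1`, `c = 2 (8μ)^d`, and `n ≥ c + 1`.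
For `p ∈ S`, let `R_p` be the least `r > 0` with `|ball_S(p, r)| ≥ n / c`.
Let `ball_P(q, R)` be a ball of minimum radius centered at a point of `P` that
contains at least `n / c` points of `S`. Then every `p ∈ S` with
`dist(q, p) ≤ R` satisfies `R_p ≤ 2 R` and `|ball_S(p, μ R_p)| ≤ n / 2`
(i.e., `p` is good). -/
theorem good_points {P : Type*} [MetricSpace P] [Fintype P]
    (d : ℝ) (hd : 1 ≤ d)
    (hdoub : ∀ (p : P) (R : ℝ), 0 < R → ∃ C : Finset P,
      (C.card : ℝ) ≤ (2 : ℝ) ^ d ∧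
      Metric.closedBall p R ⊆ ⋃ c ∈ C, Metric.closedBall c (R / 2))
    (S : Finset P) (n : ℕ) (hn : S.card = n)
    (μ : ℝ) (hμ : 1 ≤ μ)
    (c : ℝ) (hc : c = 2 * (8 * μ) ^ d)
    (hnc : c + 1 ≤ (n : ℝ))
    (q : P) (R : ℝ) (hR : 0 < R)
    (hq : (n : ℝ) / c ≤ ((S.filter fun x => dist q x ≤ R).card : ℝ))
    (hmin : ∀ (q' : P) (r : ℝ), 0 < r →
      (n : ℝ) / c ≤ ((S.filter fun x => dist q' x ≤ r).card : ℝ) → R ≤ r)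
    (p : P) (hp : p ∈ S) (hpq : dist q p ≤ R)
    (Rp : ℝ)
    (hRp : IsLeast {r : ℝ | 0 < r ∧
      (n : ℝ) / c ≤ ((S.filter fun x => dist p x ≤ r).card : ℝ)} Rp) :
    Rp ≤ 2 * R ∧
      ((S.filter fun x => dist p x ≤ μ * Rp).card : ℝ) ≤ (n : ℝ) / 2 := by
  classical
  have h8μ : (0:ℝ) < (8 * μ) ^ d := Real.rpow_pos_of_pos (by linarith) d
  have hc0 : 0 < c := by rw [hc]; positivity
  have hn0 : (0:ℝ) < n := by linarith
  have hRp0 : 0 < Rp := hRp.1.1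
  -- Part 1
  have hsub1 : (S.filter fun x => dist q x ≤ R) ⊆ (S.filter fun x => dist p x ≤ 2 * R) := by
    intro x hx
    simp only [Finset.mem_filter] at hx ⊢
    refine ⟨hx.1, ?_⟩
    have := dist_triangle p q x
    have hpq' : dist p q ≤ R := by rwa [dist_comm]
    linarith [hx.2]
  have h1 : Rp ≤ 2 * R := by
    apply hRp.2
    refine ⟨by linarith, le_trans hq ?_⟩
    exact_mod_cast Finset.card_le_card hsub1
  refine ⟨h1, ?_⟩
  -- choose k with 2μ < 2^k ≤ 4μ
  have hek : ∃ k : ℕ, 2 * μ < 2 ^ k := pow_unbounded_of_one_lt (2 * μ) one_lt_two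
  set k := Nat.find hek with hkdef
  have hk : 2 * μ < (2:ℝ) ^ k := Nat.find_spec hek
  have hkne : k ≠ 0 := by
    intro h
    rw [h] at hk; simp at hk; linarith
  have hk4 : (2:ℝ) ^ k ≤ 4 * μ := by
    have hlt : k - 1 < k := Nat.sub_lt (Nat.pos_of_ne_zero hkne) one_pos
    have := Nat.find_min hek hlt
    push_neg at this
    have hexp : k = (k - 1) + 1 := (Nat.succ_pred_eq_of_pos (Nat.pos_of_ne_zero hkne)).symm
    calc (2:ℝ) ^ k = 2 ^ (k - 1) * 2 := by nth_rewrite 1 [hexp]; rw [pow_succ]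
      _ ≤ (2 * μ) * 2 := by nlinarith
      _ = 4 * μ := by ring
  -- covering
  obtain ⟨C, hCcard, hCcov⟩ := cover_iter d hdoub k p (μ * Rp) (by positivity)
  set r' : ℝ := μ * Rp / 2 ^ k with hr'def
  have hr'pos : 0 < r' := by positivity
  have hr'lt : r' < R := by
    have h2k : (0:ℝ) < 2 ^ k := by positivity
    rw [hr'def, div_lt_iff₀ h2k]
    nlinarith
  -- each small ball has < n/c points of S
  have hsmall : ∀ c' ∈ C, ((S.filter fun x => dist c' x ≤ r').card : ℝ) ≤ (n:ℝ) / c := by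
    intro c' _
    by_contra h
    push_neg at h
    exact absurd (hmin c' r' hr'pos h.le) (not_le.2 hr'lt)
  -- subset of union
  have hsub2 : (S.filter fun x => dist p x ≤ μ * Rp) ⊆
      C.biUnion fun c' => S.filter fun x => dist c' x ≤ r' := by
    intro x hx
    simp only [Finset.mem_filter] at hx
    have hx' : x ∈ Metric.closedBall p (μ * Rp) := by
      rw [Metric.mem_closedBall, dist_comm]; exact hx.2
    have := hCcov hx'
    simp only [Set.mem_iUnion, Metric.mem_closedBall] at this
    obtain ⟨c', hc', hxc'⟩ := this
    exact Finset.mem_biUnion.2 ⟨c', hc', Finset.mem_filter.2 ⟨hx.1, by rwa [dist_comm]⟩⟩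
  -- bound C.card by (8μ)^d
  have hCbound : (C.card : ℝ) ≤ (8 * μ) ^ d := by
    calc (C.card : ℝ) ≤ ((2:ℝ) ^ d) ^ k := hCcard
      _ = ((2:ℝ) ^ k) ^ d := by
          rw [← Real.rpow_natCast ((2:ℝ) ^ d) k, ← Real.rpow_mul (by norm_num),
            mul_comm, Real.rpow_mul (by norm_num), Real.rpow_natCast]
      _ ≤ (4 * μ) ^ d := Real.rpow_le_rpow (by positivity) hk4 (by linarith)
      _ ≤ (8 * μ) ^ d := Real.rpow_le_rpow (by positivity) (by linarith) (by linarith)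
  -- final count
  calc ((S.filter fun x => dist p x ≤ μ * Rp).card : ℝ)
      ≤ ((C.biUnion fun c' => S.filter fun x => dist c' x ≤ r').card : ℝ) := by
        exact_mod_cast Finset.card_le_card hsub2
    _ ≤ ((∑ c' ∈ C, (S.filter fun x => dist c' x ≤ r').card : ℕ) : ℝ) := by
        exact_mod_cast Finset.card_biUnion_le
    _ = ∑ c' ∈ C, ((S.filter fun x => dist c' x ≤ r').card : ℝ) := by push_cast; ring
    _ ≤ ∑ c' ∈ C, (n:ℝ) / c := Finset.sum_le_sum hsmall
    _ = (C.card : ℝ) * ((n:ℝ) / c) := by rw [Finset.sum_const, nsmul_eq_mul]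
    _ ≤ (8 * μ) ^ d * ((n:ℝ) / c) := by
        exact mul_le_mul_of_nonneg_right hCbound (by positivity)
    _ = (n:ℝ) / 2 := by rw [hc]; field_simp
end

section
/- Let (P, dist) be a finite metric space whose doubling dimension is at most d, i.e., for every p ∈ P and every real R > 0 the ball ball_P(p,R) can be covered by at most 2^d balls in P of radius R/2 centered at points of P. Let S be a subset of P of size n, let μ ≥ 1 be a real number such that log₂(4μ) is not an integer, and set c = 2(4μ)^d. If n ≥ c + 1, then there exist a point p ∈ S and a real number R' > 0 such that |ball_S(p,R')| ≥ n/c and |ball_S(p, μR')| ≤ n/2. -/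
open Finset Metric Real

/-- Iterated doubling cover: after `k` halvings we cover a ball of radius `R`
by at most `(2^d)^k` balls of radius `R / 2^k`. -/
lemma iter_cover {P : Type*} [MetricSpace P] (d : ℝ)
    (hdoub : ∀ (p : P) (R : ℝ), 0 < R → ∃ C : Finset P,
      (C.card : ℝ) ≤ (2 : ℝ) ^ d ∧
      Metric.closedBall p R ⊆ ⋃ c ∈ C, Metric.closedBall c (R / 2)) :
    ∀ (k : ℕ) (p : P) (R : ℝ), 0 < R → ∃ C : Finset P,
      (C.card : ℝ) ≤ ((2:ℝ) ^ d) ^ k ∧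
      Metric.closedBall p R ⊆ ⋃ c ∈ C, Metric.closedBall c (R / 2 ^ k) := by
  intro k
  induction k with
  | zero =>
    intro p R hR
    refine ⟨{p}, by simp, ?_⟩
    simp
  | succ k ih =>
    intro p R hR
    obtain ⟨C, hCcard, hCcov⟩ := ih p R hR
    have hρ : 0 < R / 2 ^ k := by positivity
    choose f hf1 hf2 using fun c0 : P => hdoub c0 (R / 2 ^ k) hρ
    classical
    refine ⟨C.biUnion f, ?_, ?_⟩
    · calc ((C.biUnion f).card : ℝ) ≤ ∑ c0 ∈ C, ((f c0).card : ℝ) := by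
            exact_mod_cast Finset.card_biUnion_le
        _ ≤ ∑ _c0 ∈ C, (2:ℝ) ^ d := Finset.sum_le_sum fun c0 _ => hf1 c0
        _ = (C.card : ℝ) * (2:ℝ) ^ d := by rw [Finset.sum_const, nsmul_eq_mul]
        _ ≤ ((2:ℝ) ^ d) ^ k * (2:ℝ) ^ d := by
            have h2d : (0:ℝ) ≤ (2:ℝ) ^ d := Real.rpow_nonneg (by norm_num) d
            exact mul_le_mul_of_nonneg_right hCcard h2d
        _ = ((2:ℝ) ^ d) ^ (k + 1) := by ring
    · intro x hx
      have hx' := hCcov hx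
      simp only [Set.mem_iUnion] at hx'
      obtain ⟨c0, hc0, hxc0⟩ := hx'
      have hx2 := hf2 c0 hxc0
      simp only [Set.mem_iUnion] at hx2
      obtain ⟨c1, hc1, hxc1⟩ := hx2
      simp only [Set.mem_iUnion]
      refine ⟨c1, Finset.mem_biUnion.2 ⟨c0, hc0, hc1⟩, ?_⟩
      have : R / 2 ^ k / 2 = R / 2 ^ (k + 1) := by ring
      rwa [this] at hxc1

/-- **Refined separating annulus.** Let `(P, dist)` be a finite metric space of
doubling dimension at most `d`, let `S ⊆ P` have `n` points, let `μ ≥ 1` be such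
that `log₂ (4μ)` is not an integer, and set `c = 2 (4μ)^d`. If `n ≥ c + 1`, then
there exist a point `p ∈ S` and a real `R' > 0` such that
`|ball_S(p, R')| ≥ n / c` and `|ball_S(p, μ R')| ≤ n / 2`. -/
theorem separating_annulus_refined {P : Type*} [MetricSpace P] [Fintype P]
    (d : ℝ) (hd : 1 ≤ d)
    (hdoub : ∀ (p : P) (R : ℝ), 0 < R → ∃ C : Finset P,
      (C.card : ℝ) ≤ (2 : ℝ) ^ d ∧
      Metric.closedBall p R ⊆ ⋃ c ∈ C, Metric.closedBall c (R / 2))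
    (S : Finset P) (n : ℕ) (hn : S.card = n)
    (μ : ℝ) (hμ : 1 ≤ μ)
    (hlog : ¬ ∃ k : ℤ, Real.logb 2 (4 * μ) = (k : ℝ))
    (c : ℝ) (hc : c = 2 * (4 * μ) ^ d)
    (hnc : c + 1 ≤ (n : ℝ)) :
    ∃ p ∈ S, ∃ R' : ℝ, 0 < R' ∧
      (n : ℝ) / c ≤ ((S.filter fun x => dist p x ≤ R').card : ℝ) ∧
      ((S.filter fun x => dist p x ≤ μ * R').card : ℝ) ≤ (n : ℝ) / 2 := by
  classical
  have hμ0 : (0:ℝ) < μ := lt_of_lt_of_le one_pos hμ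
  have h4μ1 : (1:ℝ) ≤ 4 * μ := by nlinarith
  have h4d : (4:ℝ) ≤ (4 * μ) ^ d := by
    calc (4:ℝ) = (4:ℝ) ^ (1:ℝ) := (Real.rpow_one 4).symm
      _ ≤ (4:ℝ) ^ d := Real.rpow_le_rpow_of_exponent_le (by norm_num) hd
      _ ≤ (4 * μ) ^ d := Real.rpow_le_rpow (by norm_num) (by nlinarith) (by linarith)
  have hc0 : (0:ℝ) < c := by rw [hc]; linarith
  have hc8 : (8:ℝ) ≤ c := by rw [hc]; linarith
  have hn9 : (9:ℝ) ≤ (n:ℝ) := by linarith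
  have hS : S.Nonempty := by
    rw [← Finset.card_pos, hn]
    exact_mod_cast lt_of_lt_of_le (by norm_num : (0:ℝ) < 9) hn9
  -- the finite set of candidate (center, witness) pairs
  set T : Finset (P × P) := (S ×ˢ S).filter
    (fun pq => (n:ℝ)/2 ≤ ((S.filter fun x => dist pq.1 x ≤ dist pq.1 pq.2).card : ℝ)) with hT
  obtain ⟨p0, hp0⟩ := hS
  obtain ⟨q0, hq0, hq0max⟩ := S.exists_max_image (fun x => dist p0 x) ⟨p0, hp0⟩
  have hT0 : (p0, q0) ∈ T := by
    rw [hT, Finset.mem_filter]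
    refine ⟨Finset.mem_product.2 ⟨hp0, hq0⟩, ?_⟩
    have hfull : S.filter (fun x => dist p0 x ≤ dist p0 q0) = S :=
      Finset.filter_true_of_mem (fun x hx => hq0max x hx)
    rw [hfull, hn]; linarith
  obtain ⟨pq, hpqT, hpqmin⟩ := T.exists_min_image (fun pq => dist pq.1 pq.2) ⟨_, hT0⟩
  set p : P := pq.1 with hp
  set R : ℝ := dist pq.1 pq.2 with hRdef
  have hpS : p ∈ S := (Finset.mem_product.1 (Finset.mem_filter.1 hpqT).1).1
  have hpbig : (n:ℝ)/2 ≤ ((S.filter fun x => dist p x ≤ R).card : ℝ) :=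
    (Finset.mem_filter.1 hpqT).2
  -- R is positive
  have hR0 : 0 < R := by
    rcases lt_or_eq_of_le (dist_nonneg : (0:ℝ) ≤ R) with h | h
    · exact h
    · exfalso
      have hsub : S.filter (fun x => dist p x ≤ R) ⊆ {p} := by
        intro y hy
        have hy2 := (Finset.mem_filter.1 hy).2
        rw [hRdef, ← h] at hy2
        have : dist p y = 0 := le_antisymm hy2 dist_nonneg
        simp [Finset.mem_singleton, (dist_eq_zero.1 this).symm]
      have := Finset.card_le_card hsub
      simp only [Finset.card_singleton] at this
      have : ((S.filter fun x => dist p x ≤ R).card : ℝ) ≤ 1 := by exact_mod_cast this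
      linarith
  -- minimality of R
  have hmin : ∀ q ∈ S, ∀ r : ℝ, r < R →
      ((S.filter fun x => dist q x ≤ r).card : ℝ) < (n:ℝ)/2 := by
    intro q hq r hr
    by_contra hcon
    push_neg at hcon
    have hne : (S.filter fun x => dist q x ≤ r).Nonempty := by
      rw [← Finset.card_pos]
      exact_mod_cast lt_of_lt_of_le (by linarith : (0:ℝ) < (n:ℝ)/2) hcon
    obtain ⟨x, hx, hxmax⟩ := Finset.exists_max_image _ (fun y => dist q y) hne
    have hxS : x ∈ S := (Finset.mem_filter.1 hx).1
    have hxr : dist q x ≤ r := (Finset.mem_filter.1 hx).2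
    have hmem : (q, x) ∈ T := by
      rw [hT, Finset.mem_filter]
      refine ⟨Finset.mem_product.2 ⟨hq, hxS⟩, ?_⟩
      refine le_trans hcon ?_
      have hsub : (S.filter fun y => dist q y ≤ r) ⊆
          (S.filter fun y => dist q y ≤ dist q x) := by
        intro y hy
        exact Finset.mem_filter.2 ⟨(Finset.mem_filter.1 hy).1, hxmax y hy⟩
      exact_mod_cast Finset.card_le_card hsub
    have hge := hpqmin _ hmem
    simp only at hge
    have : dist q x < R := lt_of_le_of_lt hxr hr
    exact absurd hge (not_le.2 this)
  -- choose k
  set x : ℝ := Real.logb 2 (2 * μ) with hxdef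
  have h2μ0 : (0:ℝ) < 2 * μ := by linarith
  have hx1 : (1:ℝ) ≤ x := by
    rw [hxdef]
    calc (1:ℝ) = Real.logb 2 2 := (Real.logb_self_eq_one (b := 2) (by norm_num)).symm
      _ ≤ Real.logb 2 (2 * μ) := Real.logb_le_logb_of_le (by norm_num) (by norm_num) (by linarith)
  have hx0 : (0:ℝ) ≤ x := by linarith
  set k' : ℕ := ⌊x⌋₊ with hk'def
  have h2x : (2:ℝ) ^ x = 2 * μ := Real.rpow_logb (by norm_num) (by norm_num) h2μ0
  -- μ < 2^k'
  have hμlt : μ < (2:ℝ) ^ k' := by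
    have h1 : x - 1 < (k' : ℝ) := Nat.sub_one_lt_floor x
    have h2 : (2:ℝ) ^ (x - 1) < (2:ℝ) ^ ((k':ℕ) : ℝ) :=
      Real.rpow_lt_rpow_left_iff (by norm_num : (1:ℝ) < 2) |>.2 h1
    have h3 : (2:ℝ) ^ (x - 1) = μ := by
      rw [Real.rpow_sub (by norm_num), h2x, Real.rpow_one]; ring
    rw [h3, Real.rpow_natCast] at h2
    exact h2
  -- 2^(k'+1) ≤ 4μ
  have hk4 : (2:ℝ) ^ (k' + 1) ≤ 4 * μ := by
    have h1 : ((k':ℝ) + 1) ≤ x + 1 := by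
      have := Nat.floor_le hx0
      linarith
    have h2 : (2:ℝ) ^ ((k':ℝ) + 1) ≤ (2:ℝ) ^ (x + 1) :=
      Real.rpow_le_rpow_of_exponent_le (by norm_num) h1
    have h3 : (2:ℝ) ^ (x + 1) = 4 * μ := by
      rw [Real.rpow_add (by norm_num), h2x, Real.rpow_one]; ring
    have h4 : (2:ℝ) ^ ((k':ℝ) + 1) = (2:ℝ) ^ (k' + 1) := by
      rw [← Real.rpow_natCast 2 (k' + 1)]
      norm_num
    rw [h4, h3] at h2
    exact h2
  set k : ℕ := k' + 1 with hkdef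
  -- get the cover
  obtain ⟨C, hCcard, hCcov⟩ := iter_cover d hdoub k p R hR0
  set ρ : ℝ := R / 2 ^ k with hρdef
  have hρ0 : 0 < ρ := by rw [hρdef]; positivity
  set S' : Finset P := S.filter (fun y => dist p y ≤ R) with hS'def
  have hS'card : (n:ℝ)/2 ≤ (S'.card : ℝ) := hpbig
  -- S' is covered by the pieces
  have hsub : S' ⊆ C.biUnion (fun c0 => S'.filter (fun y => dist c0 y ≤ ρ)) := by
    intro y hy
    have hyball : y ∈ Metric.closedBall p R := by
      rw [Metric.mem_closedBall, dist_comm]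
      exact (Finset.mem_filter.1 hy).2
    have hy2 := hCcov hyball
    simp only [Set.mem_iUnion] at hy2
    obtain ⟨c0, hc0, hyc0⟩ := hy2
    exact Finset.mem_biUnion.2 ⟨c0, hc0,
      Finset.mem_filter.2 ⟨hy, by rw [dist_comm]; exact hyc0⟩⟩
  set t : ℝ := (n:ℝ)/2 / ((2:ℝ) ^ d) ^ k with htdef
  have h2d1 : (1:ℝ) ≤ (2:ℝ) ^ d := by
    calc (1:ℝ) = (2:ℝ) ^ (0:ℝ) := (Real.rpow_zero 2).symm
      _ ≤ (2:ℝ) ^ d := Real.rpow_le_rpow_of_exponent_le (by norm_num) (by linarith)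
  have hpowpos : (0:ℝ) < ((2:ℝ) ^ d) ^ k := by positivity
  have ht0 : 0 < t := by rw [htdef]; positivity
  -- a heavy piece exists
  have hCne : C.Nonempty := by
    have hpball : p ∈ Metric.closedBall p R := Metric.mem_closedBall_self (le_of_lt hR0)
    have := hCcov hpball
    simp only [Set.mem_iUnion] at this
    obtain ⟨c0, hc0, _⟩ := this
    exact ⟨c0, hc0⟩
  obtain ⟨c0, hc0C, hc0big⟩ : ∃ c0 ∈ C,
      t ≤ ((S'.filter (fun y => dist c0 y ≤ ρ)).card : ℝ) := by
    by_contra hall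
    push_neg at hall
    have h1 : (S'.card : ℝ) ≤ ∑ c0 ∈ C, ((S'.filter (fun y => dist c0 y ≤ ρ)).card : ℝ) := by
      have := Finset.card_le_card hsub
      have h2 := Finset.card_biUnion_le (s := C) (t := fun c0 => S'.filter (fun y => dist c0 y ≤ ρ))
      have h3 : (S'.card : ℕ) ≤ ∑ c0 ∈ C, (S'.filter (fun y => dist c0 y ≤ ρ)).card :=
        le_trans this h2
      exact_mod_cast h3
    have h2 : ∑ c0 ∈ C, ((S'.filter (fun y => dist c0 y ≤ ρ)).card : ℝ)
        < ∑ _c0 ∈ C, t := Finset.sum_lt_sum_of_nonempty hCne hall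
    have h3 : ∑ _c0 ∈ C, t = (C.card : ℝ) * t := by rw [Finset.sum_const, nsmul_eq_mul]
    have h4 : (C.card : ℝ) * t ≤ ((2:ℝ) ^ d) ^ k * t :=
      mul_le_mul_of_nonneg_right hCcard (le_of_lt ht0)
    have h5 : t * ((2:ℝ) ^ d) ^ k = (n:ℝ)/2 := by
      rw [htdef]; exact div_mul_cancel₀ _ (ne_of_gt hpowpos)
    nlinarith [h5]
  -- pick a center q ∈ S inside the heavy piece
  have hqne : (S'.filter (fun y => dist c0 y ≤ ρ)).Nonempty := by
    rw [← Finset.card_pos]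
    exact_mod_cast lt_of_lt_of_le ht0 hc0big
  obtain ⟨q, hq⟩ := hqne
  have hqS' : q ∈ S' := (Finset.mem_filter.1 hq).1
  have hqS : q ∈ S := (Finset.mem_filter.1 hqS').1
  have hqc0 : dist c0 q ≤ ρ := (Finset.mem_filter.1 hq).2
  refine ⟨q, hqS, R / 2 ^ k', by positivity, ?_, ?_⟩
  · -- large small ball
    have hsub2 : (S'.filter (fun y => dist c0 y ≤ ρ)) ⊆
        S.filter (fun y => dist q y ≤ R / 2 ^ k') := by
      intro y hy
      have hyS : y ∈ S := (Finset.mem_filter.1 ((Finset.mem_filter.1 hy).1)).1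
      have hyc0 : dist c0 y ≤ ρ := (Finset.mem_filter.1 hy).2
      refine Finset.mem_filter.2 ⟨hyS, ?_⟩
      have htri : dist q y ≤ dist q c0 + dist c0 y := dist_triangle q c0 y
      have h2ρ : 2 * ρ = R / 2 ^ k' := by
        rw [hρdef, hkdef]
        field_simp
        ring
      rw [dist_comm q c0] at htri
      linarith
    have hcard2 : ((S'.filter (fun y => dist c0 y ≤ ρ)).card : ℝ) ≤
        ((S.filter (fun y => dist q y ≤ R / 2 ^ k')).card : ℝ) := by
      exact_mod_cast Finset.card_le_card hsub2
    -- n/c ≤ t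
    have hpow : ((2:ℝ) ^ d) ^ k ≤ (4 * μ) ^ d := by
      have h1 : ((2:ℝ) ^ d) ^ k = ((2:ℝ) ^ (k:ℕ)) ^ d := by
        rw [← Real.rpow_natCast ((2:ℝ) ^ d) k, ← Real.rpow_natCast (2:ℝ) k,
          ← Real.rpow_mul (by norm_num : (0:ℝ) ≤ 2),
          ← Real.rpow_mul (by norm_num : (0:ℝ) ≤ 2), mul_comm]
      rw [h1]
      exact Real.rpow_le_rpow (by positivity) (by rw [hkdef]; exact hk4) (by linarith)
    have hnc_t : (n:ℝ) / c ≤ t := by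
      rw [htdef, div_div]
      apply div_le_div_of_nonneg_left (by positivity) (by positivity)
      rw [hc]
      linarith
    linarith
  · -- small big ball
    have hμR : μ * (R / 2 ^ k') < R := by
      have h1 : μ * (R / 2 ^ k') = (μ / 2 ^ k') * R := by ring
      have h2 : μ / 2 ^ k' < 1 := by
        rw [div_lt_one (by positivity)]
        exact hμlt
      rw [h1]
      nlinarith [hR0]
    exact le_of_lt (hmin q hqS _ hμR)
end

section
/- Let (P, dist) be a metric space, let S be a finite subset of P with |S| ≥ 2, let δ(S) be the closest-pair distance in S, let p ∈ P, let R > 0 and t > 0 be real numbers, and suppose R/t ≥ δ(S). Set S₁ = ball_S(p,R), S₂ = annulus_S(p, R, (1+1/t)R), and S₃ = S \ (S₁ ∪ S₂). Then for every x ∈ S₁ and every y ∈ S₃ it holds that dist(x,y) > R/t ≥ δ(S), and consequently δ(S) = min(δ(S₁ ∪ S₂), δ(S₂ ∪ S₃)). -/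
open scoped ENNReal

/-- The closest-pair distance `δ(A)` of a finite point set `A` in a metric space:
the minimum of `dist x y` over distinct `x, y ∈ A`, and `∞` if `|A| ≤ 1`. -/
noncomputable def closestPairDist {P : Type*} [MetricSpace P] (A : Finset P) : ℝ≥0∞ :=
  sInf {r : ℝ≥0∞ | ∃ x ∈ A, ∃ y ∈ A, x ≠ y ∧ r = edist x y}

lemma closestPairDist_mono {P : Type*} [MetricSpace P] {A B : Finset P} (h : A ⊆ B) :
    closestPairDist B ≤ closestPairDist A := by
  apply sInf_le_sInf
  rintro r ⟨x, hx, y, hy, hxy, rfl⟩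
  exact ⟨x, h hx, y, h hy, hxy, rfl⟩

lemma closestPairDist_le {P : Type*} [MetricSpace P] {A : Finset P} {x y : P}
    (hx : x ∈ A) (hy : y ∈ A) (hxy : x ≠ y) : closestPairDist A ≤ edist x y :=
  sInf_le ⟨x, hx, y, hy, hxy, rfl⟩

/-- Let `S` be a finite subset with `|S| ≥ 2` of a metric space `(P, dist)`, let
`p ∈ P`, `R > 0`, `t > 0` with `R / t ≥ δ(S)`. Put `S₁ = ball_S(p, R)`,
`S₂ = annulus_S(p, R, (1 + 1/t) R)` and `S₃ = S \ (S₁ ∪ S₂)`. Then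
`dist(x, y) > R / t (≥ δ(S))` for all `x ∈ S₁`, `y ∈ S₃`, and consequently
`δ(S) = min (δ(S₁ ∪ S₂)) (δ(S₂ ∪ S₃))`. -/
theorem annulus_separates {P : Type*} [MetricSpace P] [DecidableEq P]
    (S : Finset P) (hS : 2 ≤ S.card)
    (p : P) (R t : ℝ) (hR : 0 < R) (ht : 0 < t)
    (hsep : closestPairDist S ≤ ENNReal.ofReal (R / t))
    (S₁ S₂ S₃ : Finset P)
    (hS₁ : S₁ = S.filter fun x => dist p x ≤ R)
    (hS₂ : S₂ = S.filter fun x => R < dist p x ∧ dist p x ≤ (1 + 1 / t) * R)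
    (hS₃ : S₃ = S \ (S₁ ∪ S₂)) :
    (∀ x ∈ S₁, ∀ y ∈ S₃, R / t < dist x y) ∧
    closestPairDist S =
      min (closestPairDist (S₁ ∪ S₂)) (closestPairDist (S₂ ∪ S₃)) := by
  have hS₁sub : S₁ ⊆ S := by rw [hS₁]; exact Finset.filter_subset _ _
  have hS₂sub : S₂ ⊆ S := by rw [hS₂]; exact Finset.filter_subset _ _
  have hS₃sub : S₃ ⊆ S := by rw [hS₃]; exact Finset.sdiff_subset
  have key : ∀ x ∈ S₁, ∀ y ∈ S₃, R / t < dist x y := by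
    intro x hx y hy
    rw [hS₁, Finset.mem_filter] at hx
    rw [hS₃, Finset.mem_sdiff, Finset.mem_union, hS₁, hS₂, Finset.mem_filter,
      Finset.mem_filter] at hy
    obtain ⟨hyS, hy'⟩ := hy
    push_neg at hy'
    obtain ⟨hy1, hy2⟩ := hy'
    have hRy : R < dist p y := hy1 hyS
    have hRy2 : (1 + 1 / t) * R < dist p y := hy2 hyS hRy
    have htri : dist p y ≤ dist p x + dist x y := dist_triangle p x y
    have h1 : R / t = (1 / t) * R := by ring
    linarith [hx.2]
  refine ⟨key, le_antisymm ?_ ?_⟩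
  · exact le_min (closestPairDist_mono (Finset.union_subset hS₁sub hS₂sub))
      (closestPairDist_mono (Finset.union_subset hS₂sub hS₃sub))
  · -- the infimum is attained; the attaining pair is not a cross pair
    set T : Set ℝ≥0∞ := {r : ℝ≥0∞ | ∃ x ∈ S, ∃ y ∈ S, x ≠ y ∧ r = edist x y} with hT
    have hfin : T.Finite := by
      apply Set.Finite.subset (Set.Finite.image (fun q : P × P => edist q.1 q.2)
        (S.finite_toSet.prod S.finite_toSet))
      rintro r ⟨x, hx, y, hy, hxy, rfl⟩
      exact ⟨(x, y), ⟨hx, hy⟩, rfl⟩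
    have hne : T.Nonempty := by
      obtain ⟨x, hx, y, hy, hxy⟩ := Finset.one_lt_card.mp hS
      exact ⟨edist x y, x, hx, y, hy, hxy, rfl⟩
    have hmem : closestPairDist S ∈ T := hne.csInf_mem hfin
    obtain ⟨x, hx, y, hy, hxy, heq⟩ := hmem
    have htrich : ∀ z ∈ S, z ∈ S₁ ∨ z ∈ S₂ ∨ z ∈ S₃ := by
      intro z hz
      by_cases h1 : z ∈ S₁
      · exact Or.inl h1
      by_cases h2 : z ∈ S₂
      · exact Or.inr (Or.inl h2)
      · exact Or.inr (Or.inr (by rw [hS₃, Finset.mem_sdiff, Finset.mem_union]; tauto))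
    have hcross : ∀ a ∈ S₁, ∀ b ∈ S₃, closestPairDist S ≠ edist a b := by
      intro a ha b hb habs
      have hlt := key a ha b hb
      have hRt : 0 < R / t := div_pos hR ht
      have : ENNReal.ofReal (R / t) < edist a b := by
        rw [edist_dist]
        exact (ENNReal.ofReal_lt_ofReal_iff (hRt.trans hlt)).mpr hlt
      exact absurd (hsep.trans_lt this) (by rw [habs]; exact lt_irrefl _)
    have hgoal : ∀ {A : Finset P}, x ∈ A → y ∈ A →
        min (closestPairDist (S₁ ∪ S₂)) (closestPairDist (S₂ ∪ S₃)) ≤ closestPairDist S →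
        True := fun _ _ _ => trivial
    rcases htrich x hx with hx1 | hx2 | hx3 <;> rcases htrich y hy with hy1 | hy2 | hy3
    · exact (min_le_left _ _).trans (heq ▸ closestPairDist_le
        (Finset.mem_union_left _ hx1) (Finset.mem_union_left _ hy1) hxy)
    · exact (min_le_left _ _).trans (heq ▸ closestPairDist_le
        (Finset.mem_union_left _ hx1) (Finset.mem_union_right _ hy2) hxy)
    · exact absurd heq (hcross x hx1 y hy3)
    · exact (min_le_left _ _).trans (heq ▸ closestPairDist_le
        (Finset.mem_union_right _ hx2) (Finset.mem_union_left _ hy1) hxy)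
    · exact (min_le_left _ _).trans (heq ▸ closestPairDist_le
        (Finset.mem_union_right _ hx2) (Finset.mem_union_right _ hy2) hxy)
    · exact (min_le_right _ _).trans (heq ▸ closestPairDist_le
        (Finset.mem_union_left _ hx2) (Finset.mem_union_right _ hy3) hxy)
    · exact absurd (heq.trans (edist_comm x y)) (hcross y hy1 x hx3)
    · exact (min_le_right _ _).trans (heq ▸ closestPairDist_le
        (Finset.mem_union_right _ hx3) (Finset.mem_union_left _ hy2) hxy)
    · exact (min_le_right _ _).trans (heq ▸ closestPairDist_le
        (Finset.mem_union_right _ hx3) (Finset.mem_union_right _ hy3) hxy)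
end

section
/- Let (P, dist) be a finite metric space with |P| ≥ 2 whose doubling dimension is at most d, i.e., for every p ∈ P and every real R > 0 the ball ball_P(p,R) can be covered by at most 2^d balls in P of radius R/2 centered at points of P. Let δ = δ(P) be the closest-pair distance in P, let S ⊆ P have size n, let c > 0 be a real number, and suppose p ∈ S and R > 0 satisfy |ball_S(p,R)| ≥ n/c and n/c ≥ 2. Then R ≥ δ and R ≥ (δ/4)·(n/c)^{1/d}. -/
/-- Let `(P, dist)` be a finite metric space with at least two points and doubling
dimension at most `d`, and let `δ` be its closest-pair distance. Let `S ⊆ P` have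
`n` points, let `c > 0`, and suppose `p ∈ S` and `R > 0` satisfy
`|ball_S(p, R)| ≥ n / c` and `n / c ≥ 2`. Then `R ≥ δ` and
`R ≥ (δ/4) · (n/c)^(1/d)`. -/
theorem radius_lower_bound {P : Type*} [MetricSpace P] [Fintype P]
    (d : ℝ) (hd : 1 ≤ d)
    (hP : 2 ≤ Fintype.card P)
    (hdoub : ∀ (p : P) (R : ℝ), 0 < R → ∃ C : Finset P,
      (C.card : ℝ) ≤ (2 : ℝ) ^ d ∧
      Metric.closedBall p R ⊆ ⋃ c ∈ C, Metric.closedBall c (R / 2))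
    (δ : ℝ) (hδ : IsLeast {r : ℝ | ∃ x y : P, x ≠ y ∧ dist x y = r} δ)
    (S : Finset P) (n : ℕ) (hn : S.card = n)
    (c : ℝ) (hc : 0 < c)
    (p : P) (hp : p ∈ S) (R : ℝ) (hR : 0 < R)
    (hball : (n : ℝ) / c ≤ ((S.filter fun x => dist p x ≤ R).card : ℝ))
    (hnc : 2 ≤ (n : ℝ) / c) :
    δ ≤ R ∧ (δ / 4) * ((n : ℝ) / c) ^ (1 / d) ≤ R := by
  classical
  obtain ⟨⟨x₀, y₀, hxy₀, hδeq⟩, hlb⟩ := hδ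
  have hδpos : 0 < δ := hδeq ▸ dist_pos.mpr hxy₀
  set T := S.filter fun x => dist p x ≤ R with hT
  have hT2 : 2 ≤ T.card := by exact_mod_cast hnc.trans hball
  obtain ⟨q, hqT, hqp⟩ := Finset.exists_mem_ne (show 1 < T.card by omega) p
  have hδR : δ ≤ R := by
    have h1 : dist p q ≤ R := (Finset.mem_filter.mp hqT).2
    have h2 : δ ≤ dist p q := hlb ⟨p, q, hqp.symm, rfl⟩
    linarith
  refine ⟨hδR, ?_⟩
  have h2d : (0:ℝ) < (2:ℝ)^d := Real.rpow_pos_of_pos two_pos d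
  -- iterated covering
  have cover : ∀ k : ℕ, ∃ C : Finset P, (C.card : ℝ) ≤ ((2:ℝ)^d)^k ∧
      Metric.closedBall p R ⊆ ⋃ e ∈ C, Metric.closedBall e (R / 2^k) := by
    intro k
    induction k with
    | zero =>
      refine ⟨{p}, by simp, ?_⟩
      intro x hx
      simpa using hx
    | succ k ih =>
      obtain ⟨C, hCcard, hCcov⟩ := ih
      have hpos : 0 < R / 2^k := by positivity
      choose D hDcard hDcov using fun e : P => hdoub e (R / 2^k) hpos
      refine ⟨C.biUnion D, ?_, ?_⟩
      · calc ((C.biUnion D).card : ℝ) ≤ ∑ e ∈ C, ((D e).card : ℝ) := by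
              exact_mod_cast Finset.card_biUnion_le
          _ ≤ ∑ e ∈ C, (2:ℝ)^d := Finset.sum_le_sum fun e _ => hDcard e
          _ = (C.card : ℝ) * (2:ℝ)^d := by rw [Finset.sum_const, nsmul_eq_mul]
          _ ≤ ((2:ℝ)^d)^k * (2:ℝ)^d := mul_le_mul_of_nonneg_right hCcard h2d.le
          _ = ((2:ℝ)^d)^(k+1) := by ring
      · intro x hx
        obtain ⟨e, heC, hxe⟩ := Set.mem_iUnion₂.mp (hCcov hx)
        obtain ⟨f, hfD, hxf⟩ := Set.mem_iUnion₂.mp (hDcov e hxe)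
        refine Set.mem_iUnion₂.mpr ⟨f, Finset.mem_biUnion.mpr ⟨e, heC, hfD⟩, ?_⟩
        have heq : R / 2^k / 2 = R / 2^(k+1) := by ring
        rwa [heq] at hxf
  -- choose minimal m with 2R/δ < 2^m
  have hex : ∃ k : ℕ, 2*R/δ < 2^k := pow_unbounded_of_one_lt (2*R/δ) one_lt_two
  set m := Nat.find hex with hm
  have hm1 : 2*R/δ < 2^m := Nat.find_spec hex
  have htge : (2:ℝ) ≤ 2*R/δ := by
    rw [le_div_iff₀ hδpos]; linarith
  have hm0 : m ≠ 0 := by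
    intro h
    rw [h] at hm1
    norm_num at hm1
    linarith
  have hmle : ¬ (2*R/δ < 2^(m-1)) := Nat.find_min hex (Nat.pred_lt hm0)
  push_neg at hmle
  have h2m : (2:ℝ)^m ≤ 4*R/δ := by
    have hs : (2:ℝ)^m = 2 * 2^(m-1) := by
      rw [mul_comm, ← pow_succ]
      congr 1
      omega
    rw [hs]
    calc 2 * (2:ℝ)^(m-1) ≤ 2 * (2*R/δ) := by linarith
      _ = 4*R/δ := by ring
  obtain ⟨C, hCcard, hCcov⟩ := cover m
  have hsmall : 2 * (R / 2^m) < δ := by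
    have h1 := (div_lt_iff₀ hδpos).mp hm1
    have h2mp : (0:ℝ) < (2:ℝ)^m := by positivity
    have heq : 2 * (R / 2^m) = 2*R / 2^m := by ring
    rw [heq, div_lt_iff₀ h2mp]
    nlinarith
  -- each small ball contains at most one point of T
  have hTC : (T.card : ℝ) ≤ (C.card : ℝ) := by
    have hsub : T ⊆ C.biUnion fun e => T.filter fun x => dist x e ≤ R / 2^m := by
      intro x hx
      have hxball : x ∈ Metric.closedBall p R := by
        rw [Metric.mem_closedBall, dist_comm]
        exact (Finset.mem_filter.mp hx).2
      obtain ⟨e, heC, hxe⟩ := Set.mem_iUnion₂.mp (hCcov hxball)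
      exact Finset.mem_biUnion.mpr ⟨e, heC,
        Finset.mem_filter.mpr ⟨hx, Metric.mem_closedBall.mp hxe⟩⟩
    have hone : ∀ e ∈ C, (T.filter fun x => dist x e ≤ R / 2^m).card ≤ 1 := by
      intro e _
      apply Finset.card_le_one.mpr
      intro a ha b hb
      by_contra hab
      have h1 := (Finset.mem_filter.mp ha).2
      have h2 := (Finset.mem_filter.mp hb).2
      have hδab : δ ≤ dist a b := hlb ⟨a, b, hab, rfl⟩
      have : dist a b ≤ dist a e + dist b e := by
        rw [dist_comm b e]; exact dist_triangle a e b
      linarith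
    have := calc T.card ≤ (C.biUnion fun e => T.filter fun x => dist x e ≤ R / 2^m).card :=
          Finset.card_le_card hsub
      _ ≤ ∑ e ∈ C, (T.filter fun x => dist x e ≤ R / 2^m).card := Finset.card_biUnion_le
      _ ≤ ∑ _e ∈ C, 1 := Finset.sum_le_sum hone
      _ = C.card := by simp
    exact_mod_cast this
  -- combine
  have hkey : (n:ℝ)/c ≤ (4*R/δ)^d := by
    have h1 : (n:ℝ)/c ≤ ((2:ℝ)^d)^m := hball.trans (hTC.trans hCcard)
    have h2 : ((2:ℝ)^d)^m = ((2:ℝ)^m)^d := by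
      rw [← Real.rpow_natCast ((2:ℝ)^d) m, ← Real.rpow_natCast (2:ℝ) m,
        ← Real.rpow_mul (by norm_num), ← Real.rpow_mul (by norm_num), mul_comm]
    have h3 : ((2:ℝ)^m : ℝ)^d ≤ (4*R/δ)^d :=
      Real.rpow_le_rpow (by positivity) h2m (by linarith)
    calc (n:ℝ)/c ≤ ((2:ℝ)^d)^m := h1
      _ = ((2:ℝ)^m)^d := h2
      _ ≤ (4*R/δ)^d := h3
  have hnc0 : (0:ℝ) ≤ (n:ℝ)/c := by linarith
  have hd0 : d ≠ 0 := by linarith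
  have hfin : ((n:ℝ)/c)^(1/d) ≤ 4*R/δ := by
    have := Real.rpow_le_rpow hnc0 hkey (by positivity : (0:ℝ) ≤ 1/d)
    rwa [← Real.rpow_mul (by positivity), mul_one_div_cancel hd0, Real.rpow_one] at this
  have h14 : (0:ℝ) < δ/4 := by linarith
  calc (δ/4) * ((n:ℝ)/c)^(1/d) ≤ (δ/4) * (4*R/δ) :=
        mul_le_mul_of_nonneg_left hfin h14.le
    _ = R := by field_simp
end

section
/- Let d ≥ 1 be an integer, set c = 2(4e)^d, and for n ∈ ℕ let t(n) = ⌊(1/4)·(n/c)^{1/d}⌋. Let N ≥ 2 be an integer and let T : {2, 3, …, N} → ℝ≥0 be a function such that for every n with 2(16e)^d ≤ n ≤ N one has T(n) ≤ c·n + max (T(n') + T(n'')), where the maximum is taken over all pairs of integers (n', n'') satisfying 2 ≤ n' ≤ (1 − 1/c)n, 2 ≤ n'' ≤ (1 − 1/c)n, and n' + n'' ≤ n + n/t(n). Let N₀ = e^{α(d+1)!} with α = 16^d·c^{d+1}, and let A be the maximum of 2c² and max{T(k)/(k·ln k) : 2 ≤ k < N₀}. Then T(n) ≤ A·n·ln n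 for all integers n with 2 ≤ n ≤ N. -/
set_option maxHeartbeats 1000000

lemma aux_nat_succ_le_16_pow (d : ℕ) : d + 1 ≤ 16 ^ d := by
  induction d with
  | zero => simp
  | succ k ih =>
    have h1 : 1 ≤ 16 ^ k := Nat.one_le_pow _ _ (by norm_num)
    calc k + 1 + 1 ≤ 16 ^ k + 16 ^ k := by omega
    _ ≤ 16 ^ (k + 1) := by rw [pow_succ]; omega

/-- **Solving the recurrence.** Let `d ≥ 1` be an integer, `c = 2 (4e)^d`, and
`t(n) = ⌊(1/4) (n/c)^(1/d)⌋`. Let `N ≥ 2` and let `T : {2, …, N} → ℝ≥0` satisfy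
the recurrence `T(n) ≤ c n + max (T(n') + T(n''))`, the maximum being over
integers `n', n''` with `2 ≤ n' ≤ (1 - 1/c) n`, `2 ≤ n'' ≤ (1 - 1/c) n` and
`n' + n'' ≤ n + n / t(n)`, for all `n` with `2 (16e)^d ≤ n ≤ N`. With
`N₀ = e^(α (d+1)!)` for `α = 16^d c^(d+1)`, and `A` the maximum of `2 c²` and
`max {T(k) / (k ln k) : 2 ≤ k < N₀}`, we have `T(n) ≤ A n ln n` for all
`2 ≤ n ≤ N`. -/
theorem recurrence_solution (d : ℕ) (hd : 1 ≤ d)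
    (c : ℝ) (hc : c = 2 * (4 * Real.exp 1) ^ d)
    (t : ℕ → ℕ)
    (htdef : ∀ n : ℕ, t n = ⌊(1 / 4 : ℝ) * ((n : ℝ) / c) ^ (1 / (d : ℝ))⌋₊)
    (N : ℕ) (hN : 2 ≤ N)
    (T : ℕ → ℝ) (hT0 : ∀ n : ℕ, 2 ≤ n → n ≤ N → 0 ≤ T n)
    (hrec : ∀ n : ℕ, n ≤ N → 2 * (16 * Real.exp 1) ^ d ≤ (n : ℝ) →
      ∃ n' n'' : ℕ,
        (2 ≤ n' ∧ (n' : ℝ) ≤ (1 - 1 / c) * (n : ℝ)) ∧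
        (2 ≤ n'' ∧ (n'' : ℝ) ≤ (1 - 1 / c) * (n : ℝ)) ∧
        (n' : ℝ) + (n'' : ℝ) ≤ (n : ℝ) + (n : ℝ) / (t n : ℝ) ∧
        T n ≤ c * (n : ℝ) + T n' + T n'')
    (α : ℝ) (hα : α = 16 ^ d * c ^ (d + 1))
    (N₀ : ℝ) (hN₀ : N₀ = Real.exp (α * (Nat.factorial (d + 1) : ℝ)))
    (A : ℝ) (hA1 : 2 * c ^ 2 ≤ A)
    (hA2 : ∀ k : ℕ, 2 ≤ k → (k : ℝ) < N₀ → T k / ((k : ℝ) * Real.log k) ≤ A) :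
    ∀ n : ℕ, 2 ≤ n → n ≤ N → T n ≤ A * (n : ℝ) * Real.log n := by
  -- basic facts about the constants
  have he2 : (2 : ℝ) ≤ Real.exp 1 := by nlinarith [Real.add_one_le_exp (1 : ℝ)]
  have hc8 : (8 : ℝ) ≤ c := by
    have h1 : (4 : ℝ) * Real.exp 1 ≤ (4 * Real.exp 1) ^ d :=
      le_self_pow₀ (by nlinarith) (by omega)
    rw [hc]; nlinarith
  have hc0 : (0 : ℝ) < c := by linarith
  have hA0 : (0 : ℝ) ≤ A := le_trans (by positivity) hA1
  have hd0 : (0 : ℝ) < (d : ℝ) := by exact_mod_cast hd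
  have hfac1 : (1 : ℝ) ≤ ((d + 1).factorial : ℝ) := by
    exact_mod_cast Nat.one_le_iff_ne_zero.mpr (Nat.factorial_ne_zero _)
  have h16d : (d : ℝ) + 1 ≤ 16 ^ d := by exact_mod_cast aux_nat_succ_le_16_pow d
  have hcd : (8 : ℝ) ^ (d + 1) ≤ c ^ (d + 1) := pow_le_pow_left₀ (by norm_num) hc8 _
  have h8d : (64 : ℝ) ≤ 8 ^ (d + 1) := by
    calc (64 : ℝ) = 8 ^ 2 := by norm_num
    _ ≤ 8 ^ (d + 1) := pow_le_pow_right₀ (by norm_num) (by omega)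
  have h16d0 : (0 : ℝ) < 16 ^ d := pow_pos (by norm_num) d
  have hα64 : 64 * ((d : ℝ) + 1) ≤ α := by
    rw [hα]
    calc 64 * ((d : ℝ) + 1) ≤ 64 * 16 ^ d := by nlinarith
    _ ≤ 16 ^ d * c ^ (d + 1) := by nlinarith
  have hα0 : (0 : ℝ) < α := by nlinarith
  have h1c : (0 : ℝ) < 1 - 1 / c := by
    have : 1 / c ≤ 1 / 8 := by
      apply div_le_div_of_nonneg_left (by norm_num) (by norm_num) hc8
    linarith
  -- strong induction on n
  intro n
  induction n using Nat.strong_induction_on with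
  | _ n IH =>
  intro h2n hnN
  have hn2 : (2 : ℝ) ≤ (n : ℝ) := by exact_mod_cast h2n
  have hn0 : (0 : ℝ) < (n : ℝ) := by linarith
  have hlogn : (0 : ℝ) < Real.log n := Real.log_pos (by linarith)
  by_cases hcase : (n : ℝ) < N₀
  · -- base case: n < N₀
    have h := hA2 n h2n hcase
    rw [div_le_iff₀ (by positivity)] at h
    calc T n ≤ A * ((n : ℝ) * Real.log n) := h
    _ = A * (n : ℝ) * Real.log n := by ring
  · -- inductive case: n ≥ N₀
    push_neg at hcase
    set L := Real.log n with hLdef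
    have hLbig : α * ((d + 1).factorial : ℝ) ≤ L := by
      rw [hLdef, ← Real.exp_le_exp, Real.exp_log hn0, ← hN₀]
      exact hcase
    have hd1 : (1 : ℝ) ≤ (d : ℝ) := by exact_mod_cast hd
    have hL1 : (1 : ℝ) ≤ L := by nlinarith
    have hLc : 1 / c ≤ L := by
      have : 1 / c ≤ 1 / 8 := by
        apply div_le_div_of_nonneg_left (by norm_num) (by norm_num) hc8
      linarith
    -- n is large enough to apply the recurrence
    have hbig : 2 * (16 * Real.exp 1) ^ d ≤ (n : ℝ) := by
      have h4 : (2 : ℝ) ^ 4 ≤ Real.exp 1 ^ 4 := pow_le_pow_left₀ (by norm_num) he2 4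
      have h16e : 16 * Real.exp 1 ≤ Real.exp 1 ^ 5 := by
        have : Real.exp 1 ^ 5 = Real.exp 1 ^ 4 * Real.exp 1 := by ring
        nlinarith [Real.exp_pos 1]
      have hstep : 2 * (16 * Real.exp 1) ^ d ≤ Real.exp 1 ^ (5 * d + 1) := by
        have h1 : (16 * Real.exp 1) ^ d ≤ (Real.exp 1 ^ 5) ^ d :=
          pow_le_pow_left₀ (by positivity) h16e d
        have hp : (0 : ℝ) < Real.exp 1 ^ (5 * d) := pow_pos (Real.exp_pos 1) _
        calc 2 * (16 * Real.exp 1) ^ d ≤ 2 * (Real.exp 1 ^ 5) ^ d := by linarith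
        _ = 2 * Real.exp 1 ^ (5 * d) := by rw [← pow_mul]
        _ ≤ Real.exp 1 ^ (5 * d) * Real.exp 1 := by nlinarith
        _ = Real.exp 1 ^ (5 * d + 1) := (pow_succ _ _).symm
      have hexp : Real.exp 1 ^ (5 * d + 1) = Real.exp ((5 * d + 1 : ℕ) : ℝ) := by
        rw [← Real.exp_nat_mul]; norm_num
      have harg : ((5 * d + 1 : ℕ) : ℝ) ≤ α * ((d + 1).factorial : ℝ) := by
        push_cast
        nlinarith
      have : Real.exp ((5 * d + 1 : ℕ) : ℝ) ≤ N₀ := by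
        rw [hN₀]; exact Real.exp_le_exp.mpr harg
      calc 2 * (16 * Real.exp 1) ^ d ≤ Real.exp 1 ^ (5 * d + 1) := hstep
      _ = Real.exp ((5 * d + 1 : ℕ) : ℝ) := hexp
      _ ≤ N₀ := this
      _ ≤ (n : ℝ) := hcase
    obtain ⟨n', n'', ⟨hn'2, hn'le⟩, ⟨hn''2, hn''le⟩, hsum, hTrec⟩ := hrec n hnN hbig
    -- n' < n and n'' < n
    have hn'lt : n' < n := by
      have : (n' : ℝ) < (n : ℝ) := by nlinarith [one_div_pos.mpr hc0]
      exact_mod_cast this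
    have hn''lt : n'' < n := by
      have : (n'' : ℝ) < (n : ℝ) := by nlinarith [one_div_pos.mpr hc0]
      exact_mod_cast this
    have hn'N : n' ≤ N := le_trans (le_of_lt hn'lt) hnN
    have hn''N : n'' ≤ N := le_trans (le_of_lt hn''lt) hnN
    -- log bounds for n' and n''
    have hlogbound : ∀ m : ℕ, 2 ≤ m → (m : ℝ) ≤ (1 - 1 / c) * (n : ℝ) →
        Real.log m ≤ L - 1 / c := by
      intro m hm2 hmle
      have hm0 : (0 : ℝ) < (m : ℝ) := by
        have : (2 : ℝ) ≤ (m : ℝ) := by exact_mod_cast hm2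
        linarith
      have h1 : Real.log m ≤ Real.log ((1 - 1 / c) * (n : ℝ)) :=
        Real.log_le_log hm0 hmle
      have h2 : Real.log ((1 - 1 / c) * (n : ℝ)) = Real.log (1 - 1 / c) + L := by
        rw [Real.log_mul (ne_of_gt h1c) (ne_of_gt hn0)]
      have h3 : Real.log (1 - 1 / c) ≤ -(1 / c) := by
        have := Real.log_le_sub_one_of_pos h1c
        linarith
      linarith
    have hlog' : Real.log n' ≤ L - 1 / c := hlogbound n' hn'2 hn'le
    have hlog'' : Real.log n'' ≤ L - 1 / c := hlogbound n'' hn''2 hn''le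
    -- inductive bounds
    have hT' : T n' ≤ A * (n' : ℝ) * (L - 1 / c) := by
      calc T n' ≤ A * (n' : ℝ) * Real.log n' := IH n' hn'lt hn'2 hn'N
      _ ≤ A * (n' : ℝ) * (L - 1 / c) :=
        mul_le_mul_of_nonneg_left hlog' (mul_nonneg hA0 (Nat.cast_nonneg n'))
    have hT'' : T n'' ≤ A * (n'' : ℝ) * (L - 1 / c) := by
      calc T n'' ≤ A * (n'' : ℝ) * Real.log n'' := IH n'' hn''lt hn''2 hn''N
      _ ≤ A * (n'' : ℝ) * (L - 1 / c) :=
        mul_le_mul_of_nonneg_left hlog'' (mul_nonneg hA0 (Nat.cast_nonneg n''))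
    -- lower bound on t n
    have hfacpos : (0 : ℝ) < ((d + 1).factorial : ℝ) := by linarith
    have hstepA : c * (12 * c * L) ^ d ≤ (n : ℝ) := by
      have h12 : (12 : ℝ) ^ d ≤ 16 ^ d := pow_le_pow_left₀ (by norm_num) (by norm_num) d
      have hLge : 12 ^ d * c ^ (d + 1) * ((d + 1).factorial : ℝ) ≤ L := by
        have : 12 ^ d * c ^ (d + 1) * ((d + 1).factorial : ℝ) ≤
            16 ^ d * c ^ (d + 1) * ((d + 1).factorial : ℝ) := by
          have hcp : (0 : ℝ) ≤ c ^ (d + 1) := by positivity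
          exact mul_le_mul_of_nonneg_right (mul_le_mul_of_nonneg_right h12 hcp)
            (le_trans zero_le_one hfac1)
        rw [← hα] at this
        linarith
      have hLd : (0 : ℝ) ≤ L ^ d := pow_nonneg (by linarith) d
      have key : ((d + 1).factorial : ℝ) * (c * (12 * c * L) ^ d) ≤ L ^ (d + 1) := by
        have heq : ((d + 1).factorial : ℝ) * (c * (12 * c * L) ^ d) =
            (12 ^ d * c ^ (d + 1) * ((d + 1).factorial : ℝ)) * L ^ d := by
          rw [mul_pow, mul_pow]; ring
        have hmul := mul_le_mul_of_nonneg_right hLge hLd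
        calc ((d + 1).factorial : ℝ) * (c * (12 * c * L) ^ d)
            = (12 ^ d * c ^ (d + 1) * ((d + 1).factorial : ℝ)) * L ^ d := heq
        _ ≤ L * L ^ d := hmul
        _ = L ^ (d + 1) := by ring
      have h1 : c * (12 * c * L) ^ d ≤ L ^ (d + 1) / ((d + 1).factorial : ℝ) := by
        rw [le_div_iff₀ hfacpos]
        nlinarith
      have h2 : L ^ (d + 1) / ((d + 1).factorial : ℝ) ≤ Real.exp L :=
        Real.pow_div_factorial_le_exp (x := L) (by linarith) (d + 1)
      have h3 : Real.exp L = (n : ℝ) := Real.exp_log hn0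
      linarith
    have hL0 : (0 : ℝ) ≤ L := by linarith
    have h12cL : (0 : ℝ) ≤ 12 * c * L :=
      mul_nonneg (mul_nonneg (by norm_num) hc0.le) hL0
    have hstepB : 12 * c * L ≤ ((n : ℝ) / c) ^ (1 / (d : ℝ)) := by
      have hb1 : (12 * c * L) ^ d ≤ (n : ℝ) / c := by
        rw [le_div_iff₀ hc0, mul_comm]
        exact hstepA
      have hmono := Real.rpow_le_rpow (pow_nonneg h12cL d) hb1
        (by positivity : (0 : ℝ) ≤ 1 / (d : ℝ))
      rwa [← Real.rpow_natCast (12 * c * L) d, ← Real.rpow_mul h12cL, mul_one_div,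
        div_self (ne_of_gt hd0), Real.rpow_one] at hmono
    have hcL8 : (8 : ℝ) ≤ c * L := by
      calc (8 : ℝ) = 8 * 1 := by ring
      _ ≤ c * L := mul_le_mul hc8 hL1 zero_le_one hc0.le
    have ht2cL : 2 * c * L ≤ (t n : ℝ) := by
      rw [htdef n]
      have hx : 2 * c * L + 1 ≤ (1 / 4 : ℝ) * ((n : ℝ) / c) ^ (1 / (d : ℝ)) := by
        linarith
      have hfloor := Nat.sub_one_lt_floor ((1 / 4 : ℝ) * ((n : ℝ) / c) ^ (1 / (d : ℝ)))
      linarith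
    have ht0 : (0 : ℝ) < (t n : ℝ) := by linarith
    set u := (t n : ℝ) with hu
    -- final combination
    have hq : (n : ℝ) / u * L ≤ (n : ℝ) / (2 * c) := by
      have h1 : (n : ℝ) / u ≤ (n : ℝ) / (2 * c * L) :=
        div_le_div_of_nonneg_left hn0.le (mul_pos (by linarith) hlogn) ht2cL
      have h2 : (n : ℝ) / (2 * c * L) * L = (n : ℝ) / (2 * c) := by
        field_simp
      calc (n : ℝ) / u * L ≤ (n : ℝ) / (2 * c * L) * L :=
        mul_le_mul_of_nonneg_right h1 (by linarith)
      _ = (n : ℝ) / (2 * c) := h2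
    have hsum2 : A * (((n' : ℝ) + (n'' : ℝ)) * (L - 1 / c)) ≤
        A * (((n : ℝ) + (n : ℝ) / u) * (L - 1 / c)) := by
      apply mul_le_mul_of_nonneg_left _ hA0
      apply mul_le_mul_of_nonneg_right hsum (by linarith)
    have hfin : c * (n : ℝ) + A * (((n : ℝ) + (n : ℝ) / u) * (L - 1 / c)) ≤
        A * (n : ℝ) * L := by
      have e1 : A * (((n : ℝ) + (n : ℝ) / u) * (L - 1 / c)) =
          A * (n : ℝ) * L - A * (n : ℝ) / c + A * ((n : ℝ) / u * L)
            - A * ((n : ℝ) / u) / c := by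
        ring
      have h1 : A * ((n : ℝ) / u * L) ≤ A * ((n : ℝ) / (2 * c)) :=
        mul_le_mul_of_nonneg_left hq hA0
      have h2 : c * (n : ℝ) + A * ((n : ℝ) / (2 * c)) ≤ A * (n : ℝ) / c := by
        have e2 : A * (n : ℝ) / c - (c * (n : ℝ) + A * ((n : ℝ) / (2 * c))) =
            (n : ℝ) * (A - 2 * c ^ 2) / (2 * c) := by
          field_simp
          ring
        have e3 : (0 : ℝ) ≤ (n : ℝ) * (A - 2 * c ^ 2) / (2 * c) :=
          div_nonneg (mul_nonneg hn0.le (by linarith)) (by linarith)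
        linarith
      have h3 : (0 : ℝ) ≤ A * ((n : ℝ) / u) / c := by positivity
      rw [e1]
      linarith
    calc T n ≤ c * (n : ℝ) + T n' + T n'' := hTrec
    _ ≤ c * (n : ℝ) + A * (n' : ℝ) * (L - 1 / c) + A * (n'' : ℝ) * (L - 1 / c) := by
      linarith
    _ = c * (n : ℝ) + A * (((n' : ℝ) + (n'' : ℝ)) * (L - 1 / c)) := by ring
    _ ≤ c * (n : ℝ) + A * (((n : ℝ) + (n : ℝ) / u) * (L - 1 / c)) := by linarith
    _ ≤ A * (n : ℝ) * L := hfin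
end
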